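/- Fix t > 0 and nonzero reals {μ(i,j)}_{i<j}. With σ_x := [[1,0],[0,√t·x]], γ := [[0,1],[0,0]], * the transpose, and b_{n,i} := σ_{μ(1,i)} ⊗ … ⊗ σ_{μ(i−1,i)} ⊗ γ ⊗ σ₁^{⊗(n−i)} ∈ M₂(ℝ)^{⊗n}, one has for all 1 ≤ i < j ≤ n: b_{n,i}^* b_{n,j} = (t·μ(i,j))^{−1} · b_{n,j} b_{n,i}^*. -/

import Mathlib

open Filter MeasureTheory ProbabilityTheory
open scoped BigOperators ComplexOrder Classical

noncomputable section

/-- `sel a e` is `a^ε`: `a` if `e = false` (i.e. ε = 1) and `star a` if `e = true` (i.e. ε = ∗). -/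
def sel {A : Type*} [Star A] (a : A) (e : Bool) : A := if e then star a else a

/-- The product `b_{i(1)}^{ε(1)} ⋯ b_{i(r)}^{ε(r)}`, indexed by a list of (index, exponent) pairs. -/
def listProd {A : Type*} [Monoid A] [Star A] (b : ℕ → A) (l : List (ℕ × Bool)) : A :=
  (l.map fun p => sel (b p.1) p.2).prod

/-- The product `b_{i(1)}^{ε(1)} ⋯ b_{i(r)}^{ε(r)}`, indexed by `Fin r`. -/
def tupProd {A : Type*} [Monoid A] [Star A] (b : ℕ → A) {r : ℕ}
    (i : Fin r → ℕ) (eps : Fin r → Bool) : A :=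
  (List.ofFn fun k => sel (b (i k)) (eps k)).prod

/-- The mixed moment `φ(X^{ε(1)} ⋯ X^{ε(r)})` of a single element `X`. -/
def smom {A : Type*} [Ring A] [StarRing A] [Algebra ℂ A] (φ : A →ₗ[ℂ] ℂ)
    (X : A) {r : ℕ} (eps : Fin r → Bool) : ℂ :=
  φ ((List.ofFn fun k => sel X (eps k)).prod)

/-- The commutation coefficients are nonzero reals. -/
def NonzeroCoeff (c : Bool → Bool → ℕ → ℕ → ℝ) : Prop :=
  ∀ i j : ℕ, i ≠ j → ∀ e e' : Bool, c e e' i j ≠ 0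

/-- Relations (A)–(B) on the commutation coefficients (`false` = 1, `true` = ∗):
`μ_{ε,ε'}(i,j) = 1/μ_{ε',ε}(j,i)`, `μ_{1,1}(i,j) = 1/μ_{∗,∗}(i,j)`,
`μ_{1,∗}(i,j) = 1/μ_{∗,1}(i,j)`. -/
def RelAB (c : Bool → Bool → ℕ → ℕ → ℝ) : Prop :=
  (∀ i j : ℕ, i ≠ j → ∀ e e' : Bool, c e e' i j = (c e' e j i)⁻¹) ∧
  (∀ i j : ℕ, i ≠ j → c false false i j = (c true true i j)⁻¹) ∧
  (∀ i j : ℕ, i ≠ j → c false true i j = (c true false i j)⁻¹)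

/-- Condition (★) for a sequence `b` in a complex ∗-probability space, with
commutation coefficients `c e e' i j = μ_{ε,ε'}(i,j)` (`false` = 1, `true` = ∗).
The factoring over naturally ordered products is stated in block form: a naturally
ordered product is a concatenation of nonempty blocks with constant indices, the
(distinct) block indices being strictly increasing. -/
structure StarCond {A : Type*} [Ring A] [StarRing A] [Algebra ℂ A]
    (φ : A →ₗ[ℂ] ℂ) (b : ℕ → A) (c : Bool → Bool → ℕ → ℕ → ℝ) : Prop where
  zero_mean : ∀ i, φ (b i) = 0
  zero_mean_star : ∀ i, φ (star (b i)) = 0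
  zero_bb : ∀ i, φ (b i * b i) = 0
  zero_ss : ∀ i, φ (star (b i) * star (b i)) = 0
  zero_sb : ∀ i, φ (star (b i) * b i) = 0
  covar : ∀ i j : ℕ, ∀ e e' : Bool,
    φ (sel (b i) e * sel (b i) e') = φ (sel (b j) e * sel (b j) e')
  bounded : ∀ r : ℕ, ∃ α : ℝ, 0 ≤ α ∧ ∀ l : List (ℕ × Bool), l.length = r →
    ‖φ (listProd b l)‖ ≤ α
  factors : ∀ L : List (ℕ × List Bool),
    List.Chain' (· < ·) (L.map Prod.fst) → (∀ p ∈ L, p.2 ≠ []) →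
    φ ((L.map fun p => (p.2.map (sel (b p.1))).prod).prod)
      = (L.map fun p => φ ((p.2.map (sel (b p.1))).prod)).prod
  commRel : ∀ i j : ℕ, i ≠ j → ∀ e e' : Bool,
    sel (b i) e * sel (b j) e' = ((c e' e j i : ℝ) : ℂ) • (sel (b j) e' * sel (b i) e)

/-- The normalized partial sum `S_N = (b 1 + ⋯ + b N)/√N`. -/
def pSum {A : Type*} [Ring A] [Algebra ℂ A] (b : ℕ → A) (N : ℕ) : A :=
  (((Real.sqrt N)⁻¹ : ℝ) : ℂ) • ∑ i ∈ Finset.Icc 1 N, b i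

/-- A pair partition `V = {(w 1, z 1), …, (w n, z n)}` of `{1, …, 2n}` (here of `Fin (2n)`),
with `w i < z i`, `w` strictly increasing, and the `w i, z i` exhausting `Fin (2n)`. -/
structure PairPartition (n : ℕ) where
  w : Fin n → Fin (2 * n)
  z : Fin n → Fin (2 * n)
  wz : ∀ i, w i < z i
  mono : StrictMono w
  bij : Function.Bijective fun p : Fin n × Bool => if p.2 then z p.1 else w p.1

instance (n : ℕ) : Fintype (PairPartition n) :=
  Fintype.ofInjective (fun V : PairPartition n => (V.w, V.z)) (by
    rintro ⟨w₁, z₁, h₁, h₂, h₃⟩ ⟨w₂, z₂, g₁, g₂, g₃⟩ h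
    simp only [Prod.mk.injEq] at h
    obtain ⟨rfl, rfl⟩ := h
    rfl)

/-- The crossings of a pair partition: pairs of blocks `(j, k)` with `w j < w k < z j < z k`. -/
def crossSet {n : ℕ} (V : PairPartition n) : Finset (Fin n × Fin n) :=
  Finset.univ.filter fun p => V.w p.1 < V.w p.2 ∧ V.w p.2 < V.z p.1 ∧ V.z p.1 < V.z p.2

/-- The nestings of a pair partition: pairs of blocks `(j, m)` with `w j < w m < z m < z j`. -/
def nestSet {n : ℕ} (V : PairPartition n) : Finset (Fin n × Fin n) :=
  Finset.univ.filter fun p => V.w p.1 < V.w p.2 ∧ V.w p.2 < V.z p.2 ∧ V.z p.2 < V.z p.1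

/-- `cross(V)`, the number of crossings. -/
def crossNum {n : ℕ} (V : PairPartition n) : ℕ := (crossSet V).card

/-- `nest(V)`, the number of nestings. -/
def nestNum {n : ℕ} (V : PairPartition n) : ℕ := (nestSet V).card

/-- Two positions lie in the same block of the pair partition `V`. -/
def sameBlock {n : ℕ} (V : PairPartition n) (k₁ k₂ : Fin (2 * n)) : Prop :=
  k₁ = k₂ ∨ ∃ m, (k₁ = V.w m ∧ k₂ = V.z m) ∨ (k₁ = V.z m ∧ k₂ = V.w m)

/-- `(i(1), …, i(2n)) ∼ V`: entries agree exactly on the blocks of `V`. -/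
def tupleEquiv {n : ℕ} {α : Type*} (V : PairPartition n) (i : Fin (2 * n) → α) : Prop :=
  ∀ k₁ k₂, i k₁ = i k₂ ↔ sameBlock V k₁ k₂

/-- The tuples in `[N]^{2n} = {1, …, N}^{2n}` that are equivalent to `V`. -/
def tuples (n N : ℕ) (V : PairPartition n) : Finset (Fin (2 * n) → ℕ) :=
  (Fintype.piFinset fun _ : Fin (2 * n) => Finset.Icc 1 N).filter fun i => tupleEquiv V i

/-- `β^{ε(1),…,ε(2n)}_{i(1),…,i(2n)}`: the product over crossings of `V` of
`μ_{ε(z_j),ε(w_k)}(i(z_j),i(w_k))` times the product over nestings of `V` of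
`μ_{ε(z_j),ε(z_m)}(i(z_j),i(z_m)) · μ_{ε(z_j),ε(w_m)}(i(z_j),i(w_m))`. -/
def betaProd (n : ℕ) (V : PairPartition n) (eps : Fin (2 * n) → Bool)
    (c : Bool → Bool → ℕ → ℕ → ℝ) (i : Fin (2 * n) → ℕ) : ℝ :=
  (∏ p ∈ crossSet V, c (eps (V.z p.1)) (eps (V.w p.2)) (i (V.z p.1)) (i (V.w p.2))) *
  ∏ p ∈ nestSet V,
    c (eps (V.z p.1)) (eps (V.z p.2)) (i (V.z p.1)) (i (V.z p.2)) *
      c (eps (V.z p.1)) (eps (V.w p.2)) (i (V.z p.1)) (i (V.w p.2))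

/-- `X_N = N^{-n} Σ_{(i(1),…,i(2n)) ∼ V} β^{ε(1),…,ε(2n)}_{i(1),…,i(2n)}`, whose limit
(when it exists) is `λ_{V,ε(1),…,ε(2n)}`. -/
def lambdaSum (n : ℕ) (V : PairPartition n) (eps : Fin (2 * n) → Bool)
    (c : Bool → Bool → ℕ → ℕ → ℝ) (N : ℕ) : ℝ :=
  ((N : ℝ)⁻¹) ^ n * ∑ i ∈ tuples n N V, betaProd n V eps c i

/-- One-pair standard prescription: for `x = μ(i,j)` (with `i < j`),
`μ_{∗,∗} = x`, `μ_{∗,1} = t·x`, `μ_{1,1} = x⁻¹`, `μ_{1,∗} = (t·x)⁻¹`. -/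
def prescOne (t x : ℝ) (e e' : Bool) : ℝ :=
  if e then (if e' then x else t * x) else (if e' then (t * x)⁻¹ else x⁻¹)

/-- The standard prescription of commutation coefficients from `{μ(i,j)}_{i<j}`,
extended to `i > j` by `μ_{ε',ε}(j,i) = 1/μ_{ε,ε'}(i,j)`. -/
def presc (t : ℝ) (m : ℕ → ℕ → ℝ) (e e' : Bool) (i j : ℕ) : ℝ :=
  if i < j then prescOne t (m i j) e e' else (prescOne t (m j i) e' e)⁻¹

/-- The index set `{(i,j) : 1 ≤ i < j}` of the random commutation coefficients. -/
def PairIdx : Type := {p : ℕ × ℕ // 1 ≤ p.1 ∧ p.1 < p.2}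

/-- `σ_x = [[1,0],[0,√t·x]]`. -/
def sigmaM (t x : ℝ) : Matrix (Fin 2) (Fin 2) ℝ := !![1, 0; 0, Real.sqrt t * x]

/-- `γ = [[0,1],[0,0]]`. -/
def gammaM : Matrix (Fin 2) (Fin 2) ℝ := !![0, 1; 0, 0]

/-- The two-parameter Jordan–Wigner matrix
`b_{n,i} = σ_{μ(1,i)} ⊗ ⋯ ⊗ σ_{μ(i-1,i)} ⊗ γ ⊗ σ₁^{⊗(n-i)} ∈ M₂(ℝ)^{⊗n}`,
realized on the index set `Fin n → Fin 2` (tensor/Kronecker products of matrices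
have entries the products of the entries of the factors). -/
def jw (t : ℝ) (m : ℕ → ℕ → ℝ) (n i : ℕ) : Matrix (Fin n → Fin 2) (Fin n → Fin 2) ℝ :=
  Matrix.of fun x y => ∏ k : Fin n,
    (if (k : ℕ) + 1 < i then sigmaM t (m ((k : ℕ) + 1) i)
     else if (k : ℕ) + 1 = i then gammaM
     else sigmaM t 1) (x k) (y k)

/-- `φ_n(a) = ⟨a e₀, e₀⟩ = a₀₀`. -/
def phiM (n : ℕ) (a : Matrix (Fin n → Fin 2) (Fin n → Fin 2) ℝ) : ℝ :=
  a (fun _ => 0) (fun _ => 0)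

/-- The normalized partial sum `S_N = (b_{N,1} + ⋯ + b_{N,N})/√N` of Jordan–Wigner matrices. -/
def jwS (t : ℝ) (m : ℕ → ℕ → ℝ) (N : ℕ) : Matrix (Fin N → Fin 2) (Fin N → Fin 2) ℝ :=
  (Real.sqrt N)⁻¹ • ∑ i ∈ Finset.Icc 1 N, jw t m N i

/-! The matrix `b_{n,i}` is an elementary tensor, and transposition and multiplication of
elementary tensors act factorwise. Factor by factor, `b_{n,i}ᵀ b_{n,j}` and `b_{n,j} b_{n,i}ᵀ`
agree up to a scalar: away from the positions `i` and `j` both factors are diagonal `σ`'s,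
which commute; at position `i` one has `γᵀ σ_x = (√t x)⁻¹ σ_x γᵀ` with `x = μ(i,j)`, and at
position `j` one has `σ₁ γ = (√t)⁻¹ γ σ₁`. The scalars multiply to `(t μ(i,j))⁻¹`. -/

namespace Matrix

variable {ι R : Type*} [Fintype ι] [CommSemiring R] {m n : ι → Type*}

def piKron (A : ∀ k, Matrix (m k) (n k) R) : Matrix (∀ k, m k) (∀ k, n k) R :=
  of fun x y => ∏ k, A k (x k) (y k)

theorem piKron_transpose (A : ∀ k, Matrix (m k) (n k) R) :
    (piKron A)ᵀ = piKron fun k => (A k)ᵀ :=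
  rfl

theorem piKron_smul (c : ι → R) (A : ∀ k, Matrix (m k) (n k) R) :
    piKron (fun k => c k • A k) = (∏ k, c k) • piKron A := by
  ext x y
  simp [piKron, Finset.prod_mul_distrib]

theorem piKron_mul [DecidableEq ι] [∀ k, Fintype (n k)] {p : ι → Type*}
    (A : ∀ k, Matrix (m k) (n k) R) (B : ∀ k, Matrix (n k) (p k) R) :
    piKron A * piKron B = piKron fun k => A k * B k := by
  ext x y
  simp only [piKron, mul_apply, of_apply, ← Finset.prod_mul_distrib]
  rw [Finset.prod_univ_sum, Fintype.piFinset_univ]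

theorem piKron_mul_eq_smul_mul [DecidableEq ι] [∀ k, Fintype (n k)]
    {A B : ∀ k, Matrix (n k) (n k) R} (c : ι → R) (h : ∀ k, A k * B k = c k • (B k * A k)) :
    piKron A * piKron B = (∏ k, c k) • (piKron B * piKron A) := by
  simp_rw [piKron_mul, h, piKron_smul]

end Matrix

theorem Fin.prod_univ_mulSingle_succ {M : Type*} [CommMonoid M] {n i : ℕ} (hi : 1 ≤ i)
    (hin : i ≤ n) (u : M) : ∏ k : Fin n, (Pi.mulSingle i u : ℕ → M) (k + 1) = u := by
  let succEmb : Fin n ↪ ℕ := ⟨fun k => k + 1, fun a b h => Fin.ext (by simpa using h)⟩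
  refine (Finset.prod_map Finset.univ succEmb _).symm.trans ?_
  rw [Finset.prod_pi_mulSingle', if_pos]
  simp only [Finset.mem_map, Finset.mem_univ, true_and]
  exact ⟨⟨i - 1, by omega⟩, Nat.sub_add_cancel hi⟩

open Matrix

theorem sigmaM_transpose (t x : ℝ) : (sigmaM t x)ᵀ = sigmaM t x := by
  ext a b; fin_cases a <;> fin_cases b <;> rfl

theorem sigmaM_mul_comm (t x y : ℝ) : sigmaM t x * sigmaM t y = sigmaM t y * sigmaM t x := by
  ext a b; fin_cases a <;> fin_cases b <;> simp [sigmaM, mul_comm]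

theorem gammaM_transpose : gammaMᵀ = !![0, 0; 1, 0] := by
  ext a b; fin_cases a <;> fin_cases b <;> rfl

theorem gammaM_transpose_mul_sigmaM {t x : ℝ} (h : √t * x ≠ 0) :
    gammaMᵀ * sigmaM t x = (√t * x)⁻¹ • (sigmaM t x * gammaMᵀ) := by
  obtain ⟨hs, hx⟩ := mul_ne_zero_iff.mp h
  rw [gammaM_transpose]
  ext a b; fin_cases a <;> fin_cases b <;> simp [sigmaM, mul_apply, Fin.sum_univ_succ]
  field_simp

theorem sigmaM_mul_gammaM {t x : ℝ} (h : √t * x ≠ 0) :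
    sigmaM t x * gammaM = (√t * x)⁻¹ • (gammaM * sigmaM t x) := by
  obtain ⟨hs, hx⟩ := mul_ne_zero_iff.mp h
  ext a b; fin_cases a <;> fin_cases b <;> simp [sigmaM, gammaM, mul_apply, Fin.sum_univ_succ]
  field_simp

def jwFactor (t : ℝ) (m : ℕ → ℕ → ℝ) (i a : ℕ) : Matrix (Fin 2) (Fin 2) ℝ :=
  if a < i then sigmaM t (m a i) else if a = i then gammaM else sigmaM t 1

theorem jw_eq_piKron (t : ℝ) (m : ℕ → ℕ → ℝ) (n i : ℕ) :
    jw t m n i = piKron fun k : Fin n => jwFactor t m i (k + 1) :=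
  rfl

theorem jwFactor_transpose_mul_jwFactor {t : ℝ} (ht : 0 < t) {m : ℕ → ℕ → ℝ} {i j : ℕ}
    (hij : i < j) (hm : m i j ≠ 0) (a : ℕ) :
    (jwFactor t m i a)ᵀ * jwFactor t m j a =
      ((Pi.mulSingle i (√t * m i j)⁻¹ : ℕ → ℝ) a * (Pi.mulSingle j (√t)⁻¹ : ℕ → ℝ) a) •
        (jwFactor t m j a * (jwFactor t m i a)ᵀ) := by
  have hs : √t ≠ 0 := (Real.sqrt_pos.mpr ht).ne'
  rcases lt_trichotomy a i with hai | rfl | hia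
  · have haj : a < j := hai.trans hij
    simp [jwFactor, hai, haj, hai.ne, haj.ne, sigmaM_transpose, sigmaM_mul_comm]
  · simp [jwFactor, hij, hij.ne, gammaM_transpose_mul_sigmaM (mul_ne_zero hs hm)]
  rcases lt_trichotomy a j with haj | rfl | hja
  · simp [jwFactor, hia.not_gt, hia.ne', haj, haj.ne, sigmaM_transpose, sigmaM_mul_comm]
  · simpa [jwFactor, hij.not_gt, hij.ne', sigmaM_transpose] using
      sigmaM_mul_gammaM (t := t) (x := 1) (by simpa using hs)
  · simp [jwFactor, hia.not_gt, hia.ne', hja.not_gt, hja.ne', sigmaM_transpose]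

/-- for `1 ≤ i < j ≤ n`, the Jordan–Wigner matrices satisfy
`b_{n,i}^∗ b_{n,j} = (t·μ(i,j))⁻¹ · b_{n,j} b_{n,i}^∗`. -/
theorem jordan_wigner_star_comm (t : ℝ) (ht : 0 < t) (m : ℕ → ℕ → ℝ)
    (hm : ∀ i j : ℕ, i < j → m i j ≠ 0)
    (n i j : ℕ) (hi : 1 ≤ i) (hij : i < j) (hj : j ≤ n) :
    star (jw t m n i) * jw t m n j = (t * m i j)⁻¹ • (jw t m n j * star (jw t m n i)) := by
  have hscalar : (√t * m i j)⁻¹ * (√t)⁻¹ = (t * m i j)⁻¹ := by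
    rw [← mul_inv, mul_right_comm, Real.mul_self_sqrt ht.le]
  rw [star_eq_conjTranspose, conjTranspose_eq_transpose_of_trivial, jw_eq_piKron, jw_eq_piKron,
    piKron_transpose, piKron_mul_eq_smul_mul _
      fun k : Fin n => jwFactor_transpose_mul_jwFactor ht hij (hm i j hij) (k + 1),
    Finset.prod_mul_distrib, Fin.prod_univ_mulSingle_succ hi (by omega),
    Fin.prod_univ_mulSingle_succ (by omega) hj, hscalar]
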